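/- arXiv:1907.01270 — 2 statements merged into one kernel-verified Lean document; each statement's English description precedes it below -/
import Mathlib

section
/- For every instance of the restart rule (□_L^2) of LNS_Kt, i.e., with conclusion G ⇗ Γ ⇒ Δ ↙ Σ,□A ⇒ Π and premiss G ⇗ Γ,A ⇒ Δ (where G is a possibly empty context and ⇗ stands for either ↗ or ↙): if the conclusion is falsifiable, then the premiss is falsifiable. -/
/-- Formulae of tense logic: atoms (indexed by naturals), ⊥, →, □, ◇, ■, ◆. -/
inductive Formula : Type
  | atom : ℕ → Formula
  | bot : Formula
  | imp : Formula → Formula → Formula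
  | box : Formula → Formula
  | dia : Formula → Formula
  | bbox : Formula → Formula
  | bdia : Formula → Formula

def Formula.neg (A : Formula) : Formula := A.imp .bot
def Formula.and (A B : Formula) : Formula := (A.imp B.neg).neg
def Formula.or (A B : Formula) : Formula := A.neg.imp B
def Formula.top : Formula := Formula.bot.imp .bot

/-- Formulas built from atoms, ⊥, →, □, ■ only (no diamonds). -/
def Formula.NoDia : Formula → Prop
  | .atom _ => True
  | .bot => True
  | .imp A B => A.NoDia ∧ B.NoDia
  | .box A => A.NoDia
  | .dia _ => False
  | .bbox A => A.NoDia
  | .bdia _ => False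

/-- Structural connectives: `up` is ↗ and `dn` is ↙. -/
inductive Dir : Type
  | up
  | dn

/-- Linear nested sequents: a nonempty list of components `Γ ⇒ Δ`
joined by the structural connectives ↗ (`up`) and ↙ (`dn`). -/
inductive LNS : Type
  | single (Γ Δ : Multiset Formula) : LNS
  | up (Γ Δ : Multiset Formula) (S : LNS) : LNS
  | dn (Γ Δ : Multiset Formula) (S : LNS) : LNS

/-- A (possibly empty) context: a list of components, each together with the
structural connective joining it to what follows. -/
abbrev Ctx := List (Multiset Formula × Multiset Formula × Dir)

/-- `plug G S` is the linear nested sequent `G ⇗ S` (just `S` when `G` is empty). -/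
def plug : Ctx → LNS → LNS
  | [], S => S
  | (Γ, Δ, Dir.up) :: G, S => LNS.up Γ Δ (plug G S)
  | (Γ, Δ, Dir.dn) :: G, S => LNS.dn Γ Δ (plug G S)

/-- The structural connective joining the context to what follows it (none if empty). -/
def lastDir : Ctx → Option Dir
  | [] => none
  | [(_, _, d)] => some d
  | _ :: G => lastDir G

/-- Kripke forcing for tense logic. -/
def Force {W : Type} (R : W → W → Prop) (V : W → ℕ → Prop) : W → Formula → Prop
  | w, .atom p => V w p
  | _, .bot => False
  | w, .imp A B => Force R V w A → Force R V w B
  | w, .box A => ∀ v, R w v → Force R V v A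
  | w, .dia A => ∃ v, R w v ∧ Force R V v A
  | w, .bbox A => ∀ v, R v w → Force R V v A
  | w, .bdia A => ∃ v, R v w ∧ Force R V v A

/-- Conjunction of a finite multiset of formulae (empty conjunction is ⊤). -/
noncomputable def bigAnd (Γ : Multiset Formula) : Formula :=
  Γ.toList.foldr Formula.and Formula.top

/-- Disjunction of a finite multiset of formulae (empty disjunction is ⊥). -/
noncomputable def bigOr (Δ : Multiset Formula) : Formula :=
  Δ.toList.foldr Formula.or Formula.bot

/-- The formula translation τ of a linear nested sequent. -/
noncomputable def tau : LNS → Formula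
  | .single Γ Δ => (bigAnd Γ).imp (bigOr Δ)
  | .up Γ Δ S => (bigAnd Γ).imp ((bigOr Δ).or (tau S).box)
  | .dn Γ Δ S => (bigAnd Γ).imp ((bigOr Δ).or (tau S).bbox)

/-- A formula is valid if it is forced at every world of every Kripke model. -/
def Valid (A : Formula) : Prop :=
  ∀ (W : Type) (_ : Nonempty W) (R : W → W → Prop) (V : W → ℕ → Prop) (w : W),
    Force R V w A

/-- A linear nested sequent is falsifiable if its formula translation fails at
some world of some Kripke model. -/
def Falsifiable (S : LNS) : Prop :=
  ∃ (W : Type) (_ : Nonempty W) (R : W → W → Prop) (V : W → ℕ → Prop) (w : W),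
    ¬ Force R V w (tau S)

/-!
The premiss is falsified in the same model as the conclusion. Falsifying `Γ ⇒ Δ ↙ Θ,□A ⇒ Λ`
at a world `v` yields a predecessor `u` of `v` forcing `□A`, so `A` holds at `v` alongside `Γ`
while `Δ` fails there. Falsity of the translation then climbs back through the context `G`
along the same worlds that witnessed it for the conclusion.
-/

section Force

variable {W : Type} {R : W → W → Prop} {V : W → ℕ → Prop} {w : W}

lemma force_and {A B : Formula} :
    Force R V w (A.and B) ↔ Force R V w A ∧ Force R V w B := by
  simp only [Formula.and, Formula.neg, Force]
  tauto

lemma force_or {A B : Formula} :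
    Force R V w (A.or B) ↔ Force R V w A ∨ Force R V w B := by
  simp only [Formula.or, Formula.neg, Force]
  tauto

lemma force_foldr_and (l : List Formula) :
    Force R V w (l.foldr Formula.and Formula.top) ↔ ∀ B ∈ l, Force R V w B := by
  induction l with
  | nil => simp [Force, Formula.top]
  | cons a l ih => simp [force_and, ih]

lemma force_bigAnd {Γ : Multiset Formula} :
    Force R V w (bigAnd Γ) ↔ ∀ B ∈ Γ, Force R V w B := by
  simp [bigAnd, force_foldr_and]

lemma not_force_tau_plug {S S' : LNS}
    (hS : ∀ v, ¬ Force R V v (tau S) → ¬ Force R V v (tau S')) :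
    ∀ (G : Ctx) (w : W), ¬ Force R V w (tau (plug G S)) → ¬ Force R V w (tau (plug G S'))
  | [], w, hw => hS w hw
  | (Γ, Δ, d) :: G, w, hw => by
    cases d <;>
    · simp only [plug, tau, Force, force_or, not_or, not_forall] at hw ⊢
      obtain ⟨hΓ, hΔ, v, hwv, hv⟩ := hw
      exact ⟨hΓ, hΔ, v, hwv, not_force_tau_plug hS G v hv⟩

lemma not_force_tau_restart {Γ Δ Θ Λ : Multiset Formula} {A : Formula}
    (hw : ¬ Force R V w (tau (.dn Γ Δ (.single (A.box ::ₘ Θ) Λ)))) :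
    ¬ Force R V w (tau (.single (A ::ₘ Γ) Δ)) := by
  simp only [tau, Force, force_or, not_or, not_forall] at hw ⊢
  obtain ⟨hΓ, hΔ, u, huw, hΘ, -⟩ := hw
  have hA : Force R V w A := (force_bigAnd.1 hΘ) A.box (Multiset.mem_cons_self _ _) w huw
  exact ⟨force_bigAnd.2 (Multiset.forall_mem_cons.2 ⟨hA, force_bigAnd.1 hΓ⟩), hΔ⟩

end Force

lemma falsifiable_plug_of_falsifiable_plug {S S' : LNS}
    (hS : ∀ (W : Type) (R : W → W → Prop) (V : W → ℕ → Prop) (v : W),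
      ¬ Force R V v (tau S) → ¬ Force R V v (tau S'))
    (G : Ctx) (h : Falsifiable (plug G S)) : Falsifiable (plug G S') := by
  obtain ⟨W, hW, R, V, w, hw⟩ := h
  exact ⟨W, hW, R, V, w, not_force_tau_plug (hS W R V) G w hw⟩

/-- Soundness of the restart rule (□_L^2): if the conclusion
`G ⇗ Γ ⇒ Δ ↙ Θ,□A ⇒ Λ` is falsifiable, then the premiss `G ⇗ Γ,A ⇒ Δ`
is falsifiable. -/
theorem boxL2_sound (G : Ctx) (Γ Δ Θ Λ : Multiset Formula) (A : Formula)
    (h : Falsifiable (plug G (.dn Γ Δ (.single (A.box ::ₘ Θ) Λ)))) :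
    Falsifiable (plug G (.single (A ::ₘ Γ) Δ)) :=
  falsifiable_plug_of_falsifiable_plug (fun _ _ _ _ => not_force_tau_restart) G h
end

section
/- (Cut-free completeness of LNS_Kt) For every formula φ built from atoms, ⊥, →, □, ■: if φ is valid (forced at every world of every Kripke model), then the linear nested sequent ε ⇒ φ is derivable in LNS_Kt. -/
/-- The calculus LNS_Kt. -/
inductive Deriv : LNS → Prop
  | id (G : Ctx) (Γ Δ : Multiset Formula) (p : ℕ) :
      Deriv (plug G (.single (.atom p ::ₘ Γ) (.atom p ::ₘ Δ)))
  | botL (G : Ctx) (Γ Δ : Multiset Formula) :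
      Deriv (plug G (.single (.bot ::ₘ Γ) Δ))
  | ew (G : Ctx) (Θ Λ : Multiset Formula) (d : Dir) (Γ Δ : Multiset Formula) :
      Deriv (plug G (.single Θ Λ)) →
      Deriv (plug (G ++ [(Θ, Λ, d)]) (.single Γ Δ))
  | impR (G : Ctx) (Γ Δ : Multiset Formula) (A B : Formula) :
      Deriv (plug G (.single (A ::ₘ Γ) (B ::ₘ A.imp B ::ₘ Δ))) →
      Deriv (plug G (.single Γ (A.imp B ::ₘ Δ)))
  | impL (G : Ctx) (Γ Δ : Multiset Formula) (A B : Formula) :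
      Deriv (plug G (.single (B ::ₘ A.imp B ::ₘ Γ) Δ)) →
      Deriv (plug G (.single (A.imp B ::ₘ Γ) (A ::ₘ Δ))) →
      Deriv (plug G (.single (A.imp B ::ₘ Γ) Δ))
  | boxR1 (G : Ctx) (Γ Δ Θ Λ : Multiset Formula) (A : Formula) :
      Deriv (plug G (.dn Γ (A ::ₘ Δ) (.single Θ (A.box ::ₘ Λ)))) →
      Deriv (plug G (.dn Γ Δ (.up Θ (A.box ::ₘ Λ) (.single 0 {A})))) →
      Deriv (plug G (.dn Γ Δ (.single Θ (A.box ::ₘ Λ))))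
  | bboxR1 (G : Ctx) (Γ Δ Θ Λ : Multiset Formula) (A : Formula) :
      Deriv (plug G (.up Γ (A ::ₘ Δ) (.single Θ (A.bbox ::ₘ Λ)))) →
      Deriv (plug G (.up Γ Δ (.dn Θ (A.bbox ::ₘ Λ) (.single 0 {A})))) →
      Deriv (plug G (.up Γ Δ (.single Θ (A.bbox ::ₘ Λ))))
  | boxR2 (G : Ctx) (Γ Δ : Multiset Formula) (A : Formula) :
      lastDir G ≠ some Dir.dn →
      Deriv (plug G (.up Γ (A.box ::ₘ Δ) (.single 0 {A}))) →
      Deriv (plug G (.single Γ (A.box ::ₘ Δ)))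
  | bboxR2 (G : Ctx) (Γ Δ : Multiset Formula) (A : Formula) :
      lastDir G ≠ some Dir.up →
      Deriv (plug G (.dn Γ (A.bbox ::ₘ Δ) (.single 0 {A}))) →
      Deriv (plug G (.single Γ (A.bbox ::ₘ Δ)))
  | boxL1 (G : Ctx) (Γ Δ Θ Λ : Multiset Formula) (A : Formula) :
      Deriv (plug G (.up (A.box ::ₘ Γ) Δ (.single (A ::ₘ Θ) Λ))) →
      Deriv (plug G (.up (A.box ::ₘ Γ) Δ (.single Θ Λ)))
  | bboxL1 (G : Ctx) (Γ Δ Θ Λ : Multiset Formula) (A : Formula) :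
      Deriv (plug G (.dn (A.bbox ::ₘ Γ) Δ (.single (A ::ₘ Θ) Λ))) →
      Deriv (plug G (.dn (A.bbox ::ₘ Γ) Δ (.single Θ Λ)))
  | boxL2 (G : Ctx) (Γ Δ Θ Λ : Multiset Formula) (A : Formula) :
      Deriv (plug G (.single (A ::ₘ Γ) Δ)) →
      Deriv (plug G (.dn Γ Δ (.single (A.box ::ₘ Θ) Λ)))
  | bboxL2 (G : Ctx) (Γ Δ Θ Λ : Multiset Formula) (A : Formula) :
      Deriv (plug G (.single (A ::ₘ Γ) Δ)) →
      Deriv (plug G (.up Γ Δ (.single (A.bbox ::ₘ Θ) Λ)))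

/-!
Proof search, read backwards. Starting from an underivable `ε ⇒ φ`, components are extended by
subformulas of `φ` so that the linear nested sequent stays underivable: the rules for `→` and
`□L¹`/`■L¹` grow the current component, `□L²`/`■L²` and `□R¹`/`■R¹` feed formulas back into its
parent, and every `□A` (`■A`) on the right that the parent does not already refute gets a new
child `↗ ε ⇒ A` (`↙ ε ⇒ A`) by `□R²`/`■R²` or `□R¹`/`■R¹`. Children have smaller modal depth,
and feeding back restarts the parent with fewer subformulas missing, so the search ends in a
set of saturated components. Related by the box conditions, they form a Kripke model in which
each world forces its antecedent and refutes its succedent; in particular `φ` fails at the root.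
-/

deriving instance DecidableEq for Formula

namespace Dir

def flip : Dir → Dir
  | up => dn
  | dn => up

@[simp] theorem flip_flip (d : Dir) : d.flip.flip = d := by cases d <;> rfl

end Dir

namespace Formula

def boxd : Dir → Formula → Formula
  | .up => box
  | .dn => bbox

def modalDepth : Formula → ℕ
  | atom _ | bot => 0
  | imp A B => max A.modalDepth B.modalDepth
  | box A | dia A | bbox A | bdia A => A.modalDepth + 1

def subformulas : Formula → Finset Formula
  | atom p => {atom p}
  | bot => {bot}
  | imp A B => insert (imp A B) (A.subformulas ∪ B.subformulas)
  | box A => insert (box A) A.subformulas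
  | dia A => insert (dia A) A.subformulas
  | bbox A => insert (bbox A) A.subformulas
  | bdia A => insert (bdia A) A.subformulas

@[simp] theorem modalDepth_boxd (d : Dir) (A : Formula) :
    (boxd d A).modalDepth = A.modalDepth + 1 := by
  cases d <;> rfl

theorem subformulas_boxd (d : Dir) (A : Formula) :
    (boxd d A).subformulas = insert (boxd d A) A.subformulas := by
  cases d <;> rfl

theorem mem_subformulas_self (A : Formula) : A ∈ A.subformulas := by
  cases A <;> simp [subformulas]

theorem subformulas_subset_of_mem {A B : Formula} (h : B ∈ A.subformulas) :
    B.subformulas ⊆ A.subformulas := by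
  induction A with
  | atom | bot => simp_all [subformulas]
  | imp A₁ A₂ ih₁ ih₂ =>
    simp only [subformulas, Finset.mem_insert, Finset.mem_union] at h
    rcases h with rfl | h | h
    · rfl
    · exact (ih₁ h).trans (by intro; simp_all [subformulas])
    · exact (ih₂ h).trans (by intro; simp_all [subformulas])
  | box A ih | dia A ih | bbox A ih | bdia A ih =>
    simp only [subformulas, Finset.mem_insert] at h
    rcases h with rfl | h
    · rfl
    · exact (ih h).trans (Finset.subset_insert _ _)

def subformulasUpTo (φ : Formula) (r : ℕ) : Finset Formula :=
  φ.subformulas.filter (·.modalDepth ≤ r)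

variable {φ A B : Formula} {r : ℕ}

theorem self_mem_subformulasUpTo : φ ∈ φ.subformulasUpTo φ.modalDepth := by
  simp [subformulasUpTo, mem_subformulas_self]

theorem subformulasUpTo_mono {s : ℕ} (h : r ≤ s) : φ.subformulasUpTo r ⊆ φ.subformulasUpTo s :=
  Finset.monotone_filter_right _ fun _ _ hA => hA.trans h

theorem imp_mem_subformulasUpTo (h : A.imp B ∈ φ.subformulasUpTo r) :
    A ∈ φ.subformulasUpTo r ∧ B ∈ φ.subformulasUpTo r := by
  simp only [subformulasUpTo, Finset.mem_filter, modalDepth, sup_le_iff] at h ⊢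
  have hsub := subformulas_subset_of_mem h.1
  exact ⟨⟨hsub (by simp [subformulas, mem_subformulas_self]), h.2.1⟩,
    ⟨hsub (by simp [subformulas, mem_subformulas_self]), h.2.2⟩⟩

theorem boxd_mem_subformulasUpTo {d : Dir} (h : boxd d A ∈ φ.subformulasUpTo r) :
    ∃ s, r = s + 1 ∧ A ∈ φ.subformulasUpTo s := by
  simp only [subformulasUpTo, Finset.mem_filter, modalDepth_boxd] at h
  refine ⟨r - 1, by omega, Finset.mem_filter.2 ⟨?_, by omega⟩⟩
  exact subformulas_subset_of_mem h.1 (by simp [subformulas_boxd, mem_subformulas_self])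

end Formula

theorem plug_append (G₁ G₂ : Ctx) (S : LNS) : plug (G₁ ++ G₂) S = plug G₁ (plug G₂ S) := by
  induction G₁ with
  | nil => rfl
  | cons e G ih =>
    obtain ⟨Γ, Δ, d⟩ := e
    cases d <;> simp [plug, ih]

theorem lastDir_concat (G : Ctx) (e : Multiset Formula × Multiset Formula × Dir) :
    lastDir (G ++ [e]) = some e.2.2 := by
  induction G with
  | nil => rfl
  | cons e' G ih => cases G <;> exact ih

namespace Deriv

open Formula

variable {K G : Ctx} {X Y P Q : Multiset Formula} {A B : Formula} {d : Dir}

theorem id_mem {p : ℕ} (hX : atom p ∈ X) (hY : atom p ∈ Y) : Deriv (plug K (.single X Y)) := by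
  obtain ⟨X, rfl⟩ := Multiset.exists_cons_of_mem hX
  obtain ⟨Y, rfl⟩ := Multiset.exists_cons_of_mem hY
  exact id K X Y p

theorem botL_mem (h : bot ∈ X) : Deriv (plug K (.single X Y)) := by
  obtain ⟨X, rfl⟩ := Multiset.exists_cons_of_mem h
  exact botL K X Y

theorem impR_mem (h : A.imp B ∈ Y) (hD : Deriv (plug K (.single (A ::ₘ X) (B ::ₘ Y)))) :
    Deriv (plug K (.single X Y)) := by
  obtain ⟨Y, rfl⟩ := Multiset.exists_cons_of_mem h
  exact impR K X Y A B hD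

theorem impL_mem (h : A.imp B ∈ X) (hB : Deriv (plug K (.single (B ::ₘ X) Y)))
    (hA : Deriv (plug K (.single X (A ::ₘ Y)))) : Deriv (plug K (.single X Y)) := by
  obtain ⟨X, rfl⟩ := Multiset.exists_cons_of_mem h
  exact impL K X Y A B hB hA

theorem boxdL1 (h : boxd d B ∈ P) (hD : Deriv (plug (G ++ [(P, Q, d)]) (.single (B ::ₘ X) Y))) :
    Deriv (plug (G ++ [(P, Q, d)]) (.single X Y)) := by
  obtain ⟨P, rfl⟩ := Multiset.exists_cons_of_mem h
  rw [plug_append] at hD ⊢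
  cases d
  · exact boxL1 G P Q X Y B hD
  · exact bboxL1 G P Q X Y B hD

theorem boxdL2 (h : boxd d.flip B ∈ X) (hD : Deriv (plug G (.single (B ::ₘ P) Q))) :
    Deriv (plug (G ++ [(P, Q, d)]) (.single X Y)) := by
  obtain ⟨X, rfl⟩ := Multiset.exists_cons_of_mem h
  rw [plug_append]
  cases d
  · exact bboxL2 G P Q X Y B hD
  · exact boxL2 G P Q X Y B hD

theorem boxdR1 (h : boxd d A ∈ Y)
    (hpar : Deriv (plug (G ++ [(P, A ::ₘ Q, d.flip)]) (.single X Y)))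
    (hchild : Deriv (plug (G ++ [(P, Q, d.flip)] ++ [(X, Y, d)]) (.single 0 {A}))) :
    Deriv (plug (G ++ [(P, Q, d.flip)]) (.single X Y)) := by
  obtain ⟨Y, rfl⟩ := Multiset.exists_cons_of_mem h
  simp only [plug_append] at hpar hchild ⊢
  cases d
  · exact boxR1 G P Q X Y A hpar hchild
  · exact bboxR1 G P Q X Y A hpar hchild

theorem boxdR2 (h : boxd d A ∈ Y) (hK : lastDir K ≠ some d.flip)
    (hD : Deriv (plug (K ++ [(X, Y, d)]) (.single 0 {A}))) : Deriv (plug K (.single X Y)) := by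
  obtain ⟨Y, rfl⟩ := Multiset.exists_cons_of_mem h
  rw [plug_append] at hD
  cases d
  · exact boxR2 K X Y A hK hD
  · exact bboxR2 K X Y A hK hD

end Deriv

open Formula

/-- A world of the countermodel is labelled by a component `Γ ⇒ Δ`: it forces every formula
of `Γ` and no formula of `Δ`. -/
abbrev Label := Multiset Formula × Multiset Formula

/-- What the relation of the countermodel requires of the labels of worlds with `p R c`
(for `d = up`) or `c R p` (for `d = dn`). -/
def Linked (d : Dir) (p c : Label) : Prop :=
  (∀ A, boxd d A ∈ p.1 → A ∈ c.1) ∧ ∀ A, boxd d.flip A ∈ c.1 → A ∈ p.1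

theorem linked_flip {d : Dir} {p c : Label} : Linked d.flip p c ↔ Linked d c p := by
  simp only [Linked, Dir.flip_flip]
  exact And.comm

structure Saturated (H : Set Label) (w : Label) : Prop where
  bot_notMem : bot ∉ w.1
  atom_notMem : ∀ p, atom p ∈ w.1 → atom p ∉ w.2
  imp_left : ∀ A B, A.imp B ∈ w.1 → A ∈ w.2 ∨ B ∈ w.1
  imp_right : ∀ A B, A.imp B ∈ w.2 → A ∈ w.1 ∧ B ∈ w.2
  boxd_right : ∀ d A, boxd d A ∈ w.2 → ∃ v ∈ H, Linked d w v ∧ A ∈ v.2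

theorem Saturated.mono {H H' : Set Label} {w : Label} (h : Saturated H w) (hH : H ⊆ H') :
    Saturated H' w where
  __ := h
  boxd_right d A hA :=
    let ⟨v, hv, hlink, hAv⟩ := h.boxd_right d A hA
    ⟨v, hH hv, hlink, hAv⟩

section TruthLemma

variable (H : Set Label)

def Label.rel (w v : H) : Prop := Linked .up w v

def Label.val (w : H) (p : ℕ) : Prop := atom p ∈ w.1.1

variable {H}

theorem force_boxd_iff {d : Dir} {A : Formula} {w : H} :
    Force (Label.rel H) (Label.val H) w (boxd d A) ↔
      ∀ v : H, Linked d w v → Force (Label.rel H) (Label.val H) v A := by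
  cases d
  · rfl
  · simp only [boxd, Force, Label.rel, ← linked_flip (d := .dn)]
    rfl

theorem force_of_saturated (hH : ∀ w ∈ H, Saturated H w) {A : Formula} (hA : A.NoDia) (w : H) :
    (A ∈ w.1.1 → Force (Label.rel H) (Label.val H) w A) ∧
      (A ∈ w.1.2 → ¬ Force (Label.rel H) (Label.val H) w A) := by
  have boxd_case : ∀ d A, (∀ w : H, (A ∈ w.1.1 → Force (Label.rel H) (Label.val H) w A) ∧
      (A ∈ w.1.2 → ¬ Force (Label.rel H) (Label.val H) w A)) →
      ∀ w : H, (boxd d A ∈ w.1.1 → Force (Label.rel H) (Label.val H) w (boxd d A)) ∧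
        (boxd d A ∈ w.1.2 → ¬ Force (Label.rel H) (Label.val H) w (boxd d A)) := by
    intro d A ih w
    refine ⟨fun hA => force_boxd_iff.2 fun v hv => (ih v).1 (hv.1 A hA), fun hA hF => ?_⟩
    obtain ⟨v, hvH, hv, hAv⟩ := (hH w w.2).boxd_right d A hA
    exact (ih ⟨v, hvH⟩).2 hAv (force_boxd_iff.1 hF ⟨v, hvH⟩ hv)
  induction A generalizing w with
  | atom p => exact ⟨id, fun hp hF => (hH w w.2).atom_notMem p hF hp⟩
  | bot => exact ⟨fun h => absurd h (hH w w.2).bot_notMem, fun _ hF => hF⟩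
  | imp A B ihA ihB =>
    refine ⟨fun hAB hFA => ?_, fun hAB hF => ?_⟩
    · rcases (hH w w.2).imp_left A B hAB with hA' | hB
      · exact absurd hFA ((ihA hA.1 w).2 hA')
      · exact (ihB hA.2 w).1 hB
    · obtain ⟨hA', hB⟩ := (hH w w.2).imp_right A B hAB
      exact (ihB hA.2 w).2 hB (hF ((ihA hA.1 w).1 hA'))
  | box A ih => exact boxd_case .up A (ih hA) w
  | bbox A ih => exact boxd_case .dn A (ih hA) w
  | dia | bdia => exact hA.elim

theorem not_valid_of_saturated (hH : ∀ w ∈ H, Saturated H w) {w : Label} (hw : w ∈ H)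
    {φ : Formula} (hφ : φ ∈ w.2) (hnd : φ.NoDia) : ¬ Valid φ := fun hv =>
  (force_of_saturated hH hnd ⟨w, hw⟩).2 hφ (hv H ⟨⟨w, hw⟩⟩ (Label.rel H) (Label.val H) ⟨w, hw⟩)

end TruthLemma

section Missing

variable {α : Type*} [DecidableEq α]

def missing (C : Finset α) (X Y : Multiset α) : ℕ :=
  (C \ X.toFinset).card + (C \ Y.toFinset).card

theorem card_sdiff_toFinset_le {C : Finset α} {X X' : Multiset α} (h : X ⊆ X') :
    (C \ X'.toFinset).card ≤ (C \ X.toFinset).card :=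
  Finset.card_le_card (Finset.sdiff_subset_sdiff le_rfl (Multiset.toFinset_subset.2 h))

theorem card_sdiff_toFinset_lt {C : Finset α} {X X' : Multiset α} {a : α}
    (h : X ⊆ X') (hC : a ∈ C) (hX' : a ∈ X') (hX : a ∉ X) :
    (C \ X'.toFinset).card < (C \ X.toFinset).card := by
  refine Finset.card_lt_card ⟨Finset.sdiff_subset_sdiff le_rfl (Multiset.toFinset_subset.2 h), ?_⟩
  intro hsub
  have := hsub (Finset.mem_sdiff.2 ⟨hC, by simpa using hX⟩)
  simp_all

end Missing

section Construction

abbrev Parent := Option (Multiset Formula × Multiset Formula × Dir)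

variable (φ : Formula)

def Grows (r : ℕ) (K : Ctx) (X Y : Multiset Formula) : Prop :=
  ∃ X' Y', Y ⊆ Y' ∧ missing (φ.subformulasUpTo r) X' Y' < missing (φ.subformulasUpTo r) X Y ∧
    (∀ A ∈ X', A ∈ φ.subformulasUpTo r) ∧ (∀ A ∈ Y', A ∈ φ.subformulasUpTo r) ∧
    ¬ Deriv (plug K (.single X' Y'))

def Attached : Parent → Label → Prop
  | none, _ => True
  | some (P, Q, d), w => Linked d (P, Q) w

def parentLabel : Parent → Set Label
  | none => ∅
  | some (P, Q, _) => {(P, Q)}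

def Realizable (π : Parent) (Y : Multiset Formula) :
    Prop :=
  ∃ H : Set Label, ∃ w ∈ H, Y ⊆ w.2 ∧ Attached π w ∧ ∀ v ∈ H, Saturated (H ∪ parentLabel π) v

/-- Proof search at a component below the parent `π` either feeds new formulas back into the
parent (by □L² or □R¹), or roots a saturated structure there. -/
def Outcome (r : ℕ) (G : Ctx) (π : Parent)
    (Y : Multiset Formula) : Prop :=
  (∃ P Q d, π = some (P, Q, d) ∧ Grows φ (r + 1) G P Q) ∨ Realizable π Y

variable {φ} {r : ℕ} {K G : Ctx} {X Y P Q : Multiset Formula} {A B : Formula} {d : Dir}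

theorem Outcome.mono {π : Parent} {Y' : Multiset Formula} (h : Outcome φ r G π Y')
    (hY : Y ⊆ Y') : Outcome φ r G π Y := by
  rcases h with h | ⟨H, w, hw, hYw, h⟩
  · exact Or.inl h
  · exact Or.inr ⟨H, w, hw, Multiset.Subset.trans hY hYw, h⟩

theorem grows_of_subset {X' Y' : Multiset Formula} (hXX : X ⊆ X') (hYY : Y ⊆ Y')
    (hX' : ∀ A ∈ X', A ∈ φ.subformulasUpTo r) (hY' : ∀ A ∈ Y', A ∈ φ.subformulasUpTo r)
    (hnew : (A ∈ X' ∧ A ∉ X) ∨ (A ∈ Y' ∧ A ∉ Y)) (hD : ¬ Deriv (plug K (.single X' Y'))) :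
    Grows φ r K X Y := by
  refine ⟨X', Y', hYY, ?_, hX', hY', hD⟩
  have hX := card_sdiff_toFinset_le (C := φ.subformulasUpTo r) hXX
  have hY := card_sdiff_toFinset_le (C := φ.subformulasUpTo r) hYY
  unfold missing
  rcases hnew with ⟨hA, hAX⟩ | ⟨hA, hAY⟩
  · have := card_sdiff_toFinset_lt hXX (hX' A hA) hA hAX
    omega
  · have := card_sdiff_toFinset_lt hYY (hY' A hA) hA hAY
    omega

theorem grows_of_impR (hAB : A.imp B ∈ Y) (hnew : A ∈ X → B ∉ Y)
    (hX : ∀ C ∈ X, C ∈ φ.subformulasUpTo r) (hY : ∀ C ∈ Y, C ∈ φ.subformulasUpTo r)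
    (hD : ¬ Deriv (plug K (.single X Y))) : Grows φ r K X Y := by
  obtain ⟨hA, hB⟩ := imp_mem_subformulasUpTo (hY _ hAB)
  refine grows_of_subset (A := if A ∈ X then B else A) (X' := A ::ₘ X) (Y' := B ::ₘ Y)
    (Multiset.subset_cons X A) (Multiset.subset_cons Y B) (Multiset.forall_mem_cons.2 ⟨hA, hX⟩)
    (Multiset.forall_mem_cons.2 ⟨hB, hY⟩) ?_ fun h => hD (Deriv.impR_mem hAB h)
  split_ifs with hAX
  · exact Or.inr ⟨Multiset.mem_cons_self B Y, hnew hAX⟩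
  · exact Or.inl ⟨Multiset.mem_cons_self A X, hAX⟩

theorem grows_of_impL (hAB : A.imp B ∈ X) (hBX : B ∉ X) (hAY : A ∉ Y)
    (hX : ∀ C ∈ X, C ∈ φ.subformulasUpTo r) (hY : ∀ C ∈ Y, C ∈ φ.subformulasUpTo r)
    (hD : ¬ Deriv (plug K (.single X Y))) : Grows φ r K X Y := by
  obtain ⟨hA, hB⟩ := imp_mem_subformulasUpTo (hX _ hAB)
  by_cases hleft : Deriv (plug K (.single (B ::ₘ X) Y))
  · exact grows_of_subset (Multiset.Subset.refl X) (Multiset.subset_cons Y A) hX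
      (Multiset.forall_mem_cons.2 ⟨hA, hY⟩) (Or.inr ⟨Multiset.mem_cons_self A Y, hAY⟩)
      fun h => hD (Deriv.impL_mem hAB hleft h)
  · exact grows_of_subset (Multiset.subset_cons X B) (Multiset.Subset.refl Y)
      (Multiset.forall_mem_cons.2 ⟨hB, hX⟩) hY (Or.inl ⟨Multiset.mem_cons_self B X, hBX⟩) hleft

theorem grows_or_impClosed (hX : ∀ C ∈ X, C ∈ φ.subformulasUpTo r)
    (hY : ∀ C ∈ Y, C ∈ φ.subformulasUpTo r) (hD : ¬ Deriv (plug K (.single X Y))) :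
    Grows φ r K X Y ∨ (∀ A B, A.imp B ∈ X → A ∈ Y ∨ B ∈ X) ∧
      ∀ A B, A.imp B ∈ Y → A ∈ X ∧ B ∈ Y := by
  refine or_iff_not_imp_left.2 fun hgrow => ⟨fun A B hAB => ?_, fun A B hAB => ?_⟩
  · by_contra! h
    exact hgrow (grows_of_impL hAB h.2 h.1 hX hY hD)
  · by_contra! h
    exact hgrow (grows_of_impR hAB h hX hY hD)

theorem linked_or_grows (hX : ∀ C ∈ X, C ∈ φ.subformulasUpTo r)
    (hY : ∀ C ∈ Y, C ∈ φ.subformulasUpTo r) (hP : ∀ C ∈ P, C ∈ φ.subformulasUpTo (r + 1))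
    (hQ : ∀ C ∈ Q, C ∈ φ.subformulasUpTo (r + 1))
    (hD : ¬ Deriv (plug (G ++ [(P, Q, d)]) (.single X Y))) :
    Linked d (P, Q) (X, Y) ∨ Grows φ r (G ++ [(P, Q, d)]) X Y ∨ Grows φ (r + 1) G P Q := by
  by_contra! h
  obtain ⟨hlink, hgrow, hgrowP⟩ := h
  refine hlink ⟨fun B hB => ?_, fun B hB => ?_⟩ <;> by_contra hnew
  · obtain ⟨s, hs, hBs⟩ := boxd_mem_subformulasUpTo (hP _ hB)
    obtain rfl : s = r := by omega
    exact hgrow (grows_of_subset (Multiset.subset_cons X B) (Multiset.Subset.refl Y)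
      (Multiset.forall_mem_cons.2 ⟨hBs, hX⟩) hY (Or.inl ⟨Multiset.mem_cons_self B X, hnew⟩)
      fun h => hD (Deriv.boxdL1 hB h))
  · obtain ⟨s, rfl, hBs⟩ := boxd_mem_subformulasUpTo (hX _ hB)
    exact hgrowP (grows_of_subset (Multiset.subset_cons P B) (Multiset.Subset.refl Q)
      (Multiset.forall_mem_cons.2 ⟨subformulasUpTo_mono (by omega) hBs, hP⟩) hQ
      (Or.inl ⟨Multiset.mem_cons_self B P, hnew⟩) fun h => hD (Deriv.boxdL2 hB h))

theorem grows_or_not_deriv_child {π : Parent}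
    (hG : π = none → G = []) (hA : boxd d A ∈ Y) (hAQ : ∀ P Q, π = some (P, Q, d.flip) → A ∉ Q)
    (hY : ∀ C ∈ Y, C ∈ φ.subformulasUpTo r) (hπ : ∀ P Q d', π = some (P, Q, d') →
      (∀ C ∈ P, C ∈ φ.subformulasUpTo (r + 1)) ∧ ∀ C ∈ Q, C ∈ φ.subformulasUpTo (r + 1))
    (hD : ¬ Deriv (plug (G ++ π.toList) (.single X Y))) :
    (∃ P Q, π = some (P, Q, d.flip) ∧ Grows φ (r + 1) G P Q) ∨
      ¬ Deriv (plug (G ++ π.toList ++ [(X, Y, d)]) (.single 0 {A})) := by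
  have hAr : A ∈ φ.subformulasUpTo (r + 1) := by
    obtain ⟨s, rfl, hAs⟩ := boxd_mem_subformulasUpTo (hY _ hA)
    exact subformulasUpTo_mono (by omega) hAs
  rcases π with _ | ⟨P, Q, d'⟩
  · obtain rfl := hG rfl
    exact Or.inr fun h => hD (Deriv.boxdR2 hA nofun h)
  by_cases hd : d' = d.flip
  · subst hd
    by_cases hpar : Deriv (plug (G ++ [(P, A ::ₘ Q, d.flip)]) (.single X Y))
    · exact Or.inr fun h => hD (Deriv.boxdR1 hA hpar h)
    · obtain ⟨hP, hQ⟩ := hπ P Q _ rfl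
      exact Or.inl ⟨P, Q, rfl, grows_of_subset (Multiset.Subset.refl P) (Multiset.subset_cons Q A)
        hP (Multiset.forall_mem_cons.2 ⟨hAr, hQ⟩)
        (Or.inr ⟨Multiset.mem_cons_self A Q, hAQ P Q rfl⟩) fun h => hpar (Deriv.ew _ _ _ _ _ _ h)⟩
  · refine Or.inr fun h => hD (Deriv.boxdR2 hA ?_ h)
    simpa [lastDir_concat] using hd

theorem realizable_of_witnessed {π : Parent}
    (hD : ¬ Deriv (plug K (.single X Y)))
    (himp : (∀ A B, A.imp B ∈ X → A ∈ Y ∨ B ∈ X) ∧ ∀ A B, A.imp B ∈ Y → A ∈ X ∧ B ∈ Y)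
    (hπ : Attached π (X, Y))
    (hwit : ∀ d A, boxd d A ∈ Y →
      (∃ P Q, π = some (P, Q, d.flip) ∧ A ∈ Q) ∨ Realizable (some (X, Y, d)) {A}) :
    Realizable π Y := by
  -- one structure serves all children: everything saturated up to `(X, Y)`
  let H : Set Label :=
    insert (X, Y) {v | ∃ H' : Set Label, v ∈ H' ∧ ∀ u ∈ H', Saturated (H' ∪ {(X, Y)}) u}
  refine ⟨H, (X, Y), Set.mem_insert _ _, Multiset.Subset.refl Y, hπ, ?_⟩
  rintro v (rfl | ⟨H', hv, hH'⟩)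
  · refine ⟨fun h => hD (Deriv.botL_mem h), fun p hX hY => hD (Deriv.id_mem hX hY), himp.1,
      himp.2, fun d A hA => ?_⟩
    rcases hwit d A hA with ⟨P, Q, rfl, hAQ⟩ | ⟨H', w, hw, hAw, hlink, hH'⟩
    · exact ⟨(P, Q), Or.inr rfl, linked_flip.1 hπ, hAQ⟩
    · exact ⟨w, Or.inl (Or.inr ⟨H', hw, hH'⟩), hlink, hAw (Multiset.mem_singleton_self A)⟩
  · refine (hH' v hv).mono (Set.union_subset (fun u hu => ?_) ?_)
    · exact Or.inl (Or.inr ⟨H', hu, hH'⟩)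
    · simp [H]

theorem outcome_of_not_deriv (r : ℕ) (G : Ctx)
    (π : Parent) (X Y : Multiset Formula)
    (hG : π = none → G = []) (hX : ∀ A ∈ X, A ∈ φ.subformulasUpTo r)
    (hY : ∀ A ∈ Y, A ∈ φ.subformulasUpTo r) (hπ : ∀ P Q d, π = some (P, Q, d) →
      (∀ A ∈ P, A ∈ φ.subformulasUpTo (r + 1)) ∧ ∀ A ∈ Q, A ∈ φ.subformulasUpTo (r + 1))
    (hD : ¬ Deriv (plug (G ++ π.toList) (.single X Y))) : Outcome φ r G π Y := by
  induction r using Nat.strong_induction_on generalizing G π X Y with | _ r ihr =>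
  induction hm : missing (φ.subformulasUpTo r) X Y using Nat.strong_induction_on
    generalizing X Y with | _ m ihm =>
  have restart : Grows φ r (G ++ π.toList) X Y → Outcome φ r G π Y := by
    rintro ⟨X', Y', hYY, hlt, hX', hY', hD'⟩
    exact (ihm _ (hm ▸ hlt) X' Y' hX' hY' hD' rfl).mono hYY
  rcases grows_or_impClosed hX hY hD with hgrow | himp
  · exact restart hgrow
  obtain hout | hatt : Outcome φ r G π Y ∨ Attached π (X, Y) := by
    rcases π with _ | ⟨P, Q, d⟩
    · exact Or.inr trivial
    obtain ⟨hP, hQ⟩ := hπ P Q d rfl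
    rcases linked_or_grows hX hY hP hQ hD with h | h | h
    · exact Or.inr h
    · exact Or.inl (restart h)
    · exact Or.inl (Or.inl ⟨P, Q, d, rfl, h⟩)
  · exact hout
  by_contra hnot
  refine hnot (Or.inr (realizable_of_witnessed hD himp hatt fun d A hA => ?_))
  refine or_iff_not_imp_left.2 fun hAQ => ?_
  push Not at hAQ
  rcases grows_or_not_deriv_child hG hA hAQ hY hπ hD with ⟨P, Q, hπ', hgrow⟩ | hchild
  · exact absurd (Or.inl ⟨P, Q, d.flip, hπ', hgrow⟩) hnot
  obtain ⟨s, rfl, hAs⟩ := boxd_mem_subformulasUpTo (hY _ hA)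
  rcases ihr s (Nat.lt_succ_self s) _ (some (X, Y, d)) 0 {A} nofun (by simp)
      (by simpa using hAs) (by rintro P Q d' ⟨⟩; exact ⟨hX, hY⟩) hchild with
    ⟨P, Q, d', ⟨⟩, hgrow⟩ | hreal
  · exact absurd (restart hgrow) hnot
  · exact hreal

end Construction

/-- Cut-free completeness of LNS_Kt: every valid formula built from atoms, ⊥,
→, □, ■ is derivable. -/
theorem lnskt_complete (φ : Formula) (hφ : φ.NoDia) (hv : Valid φ) :
    Deriv (LNS.single 0 {φ}) := by
  by_contra hD
  rcases outcome_of_not_deriv φ.modalDepth [] none 0 {φ} (fun _ => rfl) (by simp)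
      (by simpa using self_mem_subformulasUpTo) nofun hD with
    ⟨_, _, _, ⟨⟩, -⟩ | ⟨H, w, hw, hφw, -, hH⟩
  exact not_valid_of_saturated (by simpa [parentLabel] using hH) hw
    (hφw (Multiset.mem_singleton_self φ)) hφ hv
end
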